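/- arXiv:1403.7733 — 2 statements merged into one kernel-verified Lean document; each statement's English description precedes it below -/
import Mathlib

section
/- Let Ω be a fat theta obtained from graphs H1, H2, H3 with distinguished distinct vertices x_i, y_i ∈ V(H_i): Γ is obtained by identifying x1, x2, x3 to a vertex x and y1, y2, y3 to a vertex y, and a cycle is balanced iff its edge set lies entirely within one H_i. Let H be the graph obtained from H1, H2, H3 by identifying y_i with x_{i+1} (indices mod 3). Then F(Ω) = M(H). -/
/-- A multigraph on vertex type `V` with edge type `E`: each edge has an
unordered pair of endpoints (possibly equal, giving a loop). -/
structure Multigraph (V E : Type) where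
  ends : E → Sym2 V

namespace Multigraph

variable {V E : Type} [Fintype V] [DecidableEq V] [Fintype E] [DecidableEq E]

/-- The vertices incident with some edge of `C`. -/
def vertsOf (G : Multigraph V E) (C : Finset E) : Finset V :=
  Finset.univ.filter fun v => ∃ e ∈ C, v ∈ G.ends e

/-- Degree of `v` in the subgraph with edge set `C`; loops count twice. -/
def deg (G : Multigraph V E) (C : Finset E) (v : V) : ℕ :=
  ∑ e ∈ C, (if G.ends e = Sym2.diag v then 2 else if v ∈ G.ends e then 1 else 0)

/-- Reachability using only edges in `C`. -/
def ReachE (G : Multigraph V E) (C : Finset E) (u w : V) : Prop :=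
  Relation.ReflTransGen (fun a b => ∃ e ∈ C, a ∈ G.ends e ∧ b ∈ G.ends e) u w

/-- The subgraph with edge set `C` is connected. -/
def ConnectedOn (G : Multigraph V E) (C : Finset E) : Prop :=
  ∀ u ∈ G.vertsOf C, ∀ w ∈ G.vertsOf C, G.ReachE C u w

/-- `C` is the edge set of a cycle of `G`. -/
def IsCycle (G : Multigraph V E) (C : Finset E) : Prop :=
  C.Nonempty ∧ G.ConnectedOn C ∧ ∀ v ∈ G.vertsOf C, G.deg C v = 2

/-- `P` is the edge set of a path of `G` from `u` to `w` (of positive length). -/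
def IsPath (G : Multigraph V E) (P : Finset E) (u w : V) : Prop :=
  u ≠ w ∧ G.ConnectedOn P ∧ u ∈ G.vertsOf P ∧ w ∈ G.vertsOf P ∧
    G.deg P u = 1 ∧ G.deg P w = 1 ∧
    ∀ v ∈ G.vertsOf P, v ≠ u → v ≠ w → G.deg P v = 2

/-- Theta data: three internally disjoint `u`–`w` paths. -/
def ThetaData (G : Multigraph V E) (P₁ P₂ P₃ : Finset E) (u w : V) : Prop :=
  G.IsPath P₁ u w ∧ G.IsPath P₂ u w ∧ G.IsPath P₃ u w ∧
    Disjoint P₁ P₂ ∧ Disjoint P₁ P₃ ∧ Disjoint P₂ P₃ ∧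
    G.vertsOf P₁ ∩ G.vertsOf P₂ = {u, w} ∧
    G.vertsOf P₁ ∩ G.vertsOf P₃ = {u, w} ∧
    G.vertsOf P₂ ∩ G.vertsOf P₃ = {u, w}

/-- `T` is the edge set of a theta subgraph of `G`. -/
def IsTheta (G : Multigraph V E) (T : Finset E) : Prop :=
  ∃ u w P₁ P₂ P₃, G.ThetaData P₁ P₂ P₃ u w ∧ T = P₁ ∪ P₂ ∪ P₃

/-- The theta property: no theta subgraph contains exactly two balanced cycles. -/
def ThetaProperty (G : Multigraph V E) (B : Set (Finset E)) : Prop :=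
  ∀ u w P₁ P₂ P₃, G.ThetaData P₁ P₂ P₃ u w →
    ¬ ((P₁ ∪ P₂ ∈ B ∧ P₁ ∪ P₃ ∈ B ∧ P₂ ∪ P₃ ∉ B) ∨
       (P₁ ∪ P₂ ∈ B ∧ P₁ ∪ P₃ ∉ B ∧ P₂ ∪ P₃ ∈ B) ∨
       (P₁ ∪ P₂ ∉ B ∧ P₁ ∪ P₃ ∈ B ∧ P₂ ∪ P₃ ∈ B))

/-- `(G, B)` is a biased graph. -/
def IsBiased (G : Multigraph V E) (B : Set (Finset E)) : Prop :=
  (∀ C ∈ B, G.IsCycle C) ∧ G.ThetaProperty B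

/-- A tight handcuff: two edge-disjoint cycles meeting in exactly one vertex. -/
def TightHandcuff (G : Multigraph V E) (C₁ C₂ : Finset E) : Prop :=
  G.IsCycle C₁ ∧ G.IsCycle C₂ ∧ Disjoint C₁ C₂ ∧
    (G.vertsOf C₁ ∩ G.vertsOf C₂).card = 1

/-- A loose handcuff: two vertex-disjoint cycles joined by a path meeting them
only in its endpoints. -/
def LooseHandcuff (G : Multigraph V E) (C₁ C₂ P : Finset E) : Prop :=
  G.IsCycle C₁ ∧ G.IsCycle C₂ ∧ Disjoint (G.vertsOf C₁) (G.vertsOf C₂) ∧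
    Disjoint P C₁ ∧ Disjoint P C₂ ∧
    ∃ u₁ u₂, G.IsPath P u₁ u₂ ∧ u₁ ∈ G.vertsOf C₁ ∧ u₂ ∈ G.vertsOf C₂ ∧
      G.vertsOf P ∩ G.vertsOf C₁ = {u₁} ∧ G.vertsOf P ∩ G.vertsOf C₂ = {u₂}

/-- Circuits of the frame matroid of the biased graph `(G, B)`. -/
def FrameCircuit (G : Multigraph V E) (B : Set (Finset E)) (C : Finset E) : Prop :=
  (G.IsCycle C ∧ C ∈ B) ∨
  (∃ C₁ C₂, G.TightHandcuff C₁ C₂ ∧ C₁ ∉ B ∧ C₂ ∉ B ∧ C = C₁ ∪ C₂) ∨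
  (∃ C₁ C₂ P, G.LooseHandcuff C₁ C₂ P ∧ C₁ ∉ B ∧ C₂ ∉ B ∧ C = C₁ ∪ C₂ ∪ P) ∨
  (G.IsTheta C ∧ ∀ D ⊆ C, G.IsCycle D → D ∉ B)

/-- The balanced cycles of a signed graph `(G, σ)`. -/
def balancedCycles (G : Multigraph V E) (σ : E → ℤˣ) : Set (Finset E) :=
  {C | G.IsCycle C ∧ ∏ e ∈ C, σ e = 1}

/-- Circuits of the frame matroid of a signed graph. -/
def SFrameCircuit (G : Multigraph V E) (σ : E → ℤˣ) (C : Finset E) : Prop :=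
  G.FrameCircuit (G.balancedCycles σ) C

/-- Circuits of the lift matroid of a signed graph. -/
def LiftCircuit (G : Multigraph V E) (σ : E → ℤˣ) (C : Finset E) : Prop :=
  (G.IsCycle C ∧ ∏ e ∈ C, σ e = 1) ∨
  (∃ C₁ C₂, G.IsCycle C₁ ∧ G.IsCycle C₂ ∧
    (∏ e ∈ C₁, σ e) = -1 ∧ (∏ e ∈ C₂, σ e) = -1 ∧ Disjoint C₁ C₂ ∧
    (G.vertsOf C₁ ∩ G.vertsOf C₂).card ≤ 1 ∧ C = C₁ ∪ C₂)

/-- The sign of edge `e` after switching at the vertex labelling `δ`. -/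
def switchSign (G : Multigraph V E) (σ : E → ℤˣ) (δ : V → ℤˣ) (e : E) : ℤˣ :=
  Sym2.lift ⟨fun a b => δ a * δ b, fun a b => mul_comm _ _⟩ (G.ends e) * σ e

/-- Reachability avoiding the vertex set `X`. -/
def ReachAvoiding (G : Multigraph V E) (X : Set V) (u w : V) : Prop :=
  Relation.ReflTransGen
    (fun a b => a ∉ X ∧ b ∉ X ∧ ∃ e, a ∈ G.ends e ∧ b ∈ G.ends e) u w

/-- `G` is 2-connected. -/
def TwoConnected (G : Multigraph V E) : Prop :=
  3 ≤ Fintype.card V ∧ (∀ u w, G.ReachAvoiding ∅ u w) ∧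
    ∀ v u w, u ≠ v → w ≠ v → G.ReachAvoiding {v} u w

/-- `G` is 3-connected. -/
def ThreeConnected (G : Multigraph V E) : Prop :=
  4 ≤ Fintype.card V ∧ (∀ u w, G.ReachAvoiding ∅ u w) ∧
    (∀ v u w, u ≠ v → w ≠ v → G.ReachAvoiding {v} u w) ∧
    ∀ v v' u w, u ∉ ({v, v'} : Set V) → w ∉ ({v, v'} : Set V) →
      G.ReachAvoiding {v, v'} u w

/-- `v` is a cut-vertex of `G`. -/
def CutVertex (G : Multigraph V E) (v : V) : Prop :=
  ∃ u w, u ≠ v ∧ w ≠ v ∧ G.ReachAvoiding ∅ u w ∧ ¬ G.ReachAvoiding {v} u w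

/-- `B` is (the edge set of) a block of `G`: an equivalence class of the
relation "lying on a common cycle". -/
def IsBlock (G : Multigraph V E) (B : Finset E) : Prop :=
  ∃ e, (B : Set E) = {f | f = e ∨ ∃ C, G.IsCycle C ∧ e ∈ C ∧ f ∈ C}

/-- An end-block: a block containing at most one cut-vertex. -/
def EndBlock (G : Multigraph V E) (B : Finset E) : Prop :=
  G.IsBlock B ∧ ∀ a ∈ G.vertsOf B, ∀ b ∈ G.vertsOf B,
    G.CutVertex a → G.CutVertex b → a = b

end Multigraph

/-- Independence for a set system of circuits. -/
def MIndep {E : Type} (Circuits : Set (Finset E)) (X : Finset E) : Prop :=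
  ∀ C ∈ Circuits, ¬ C ⊆ X

/-- The matroid with the given circuits is connected. -/
def MConnected {E : Type} (Circuits : Set (Finset E)) : Prop :=
  ∀ e f : E, e ≠ f → ∃ C ∈ Circuits, e ∈ C ∧ f ∈ C

/-- The matroid with the given circuits is binary (representable over GF(2)). -/
def MBinary {E : Type} [Fintype E] [DecidableEq E] (Circuits : Set (Finset E)) : Prop :=
  ∃ (n : ℕ) (φ : E → (Fin n → ZMod 2)), ∀ X : Finset E,
    MIndep Circuits X ↔ LinearIndependent (ZMod 2) (fun e : {x // x ∈ X} => φ e.1)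


variable {V E : Type} [Fintype V] [DecidableEq V] [Fintype E] [DecidableEq E]


/-!
An unbalanced cycle of `Γ` meets two pieces, and since the pieces meet only in `x` and `y`, each
piece cuts an `x`–`y` path out of it; so every unbalanced cycle passes through both `x` and `y`.
Hence two unbalanced cycles never form a handcuff, and a theta without balanced cycles has branch
vertices `x`, `y` and its three paths in three different pieces. The circuits of `F(Ω)` are
therefore the cycles inside one piece, and the edge sets whose three pieces are `x`–`y` paths.

The same sets are the cycles of `H`: inside one piece `H` is a copy of `Γ`, and a cycle of `H`
meeting two pieces is cut by the hubs `Sum.inr (i - 1)`, `Sum.inr i` into one hub-to-hub path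
per piece `i`, the image of an `x`–`y` path of `Γ`; conversely three such paths close up around
the triangle of hubs.
-/

namespace Multigraph

open Finset Function

omit [Fintype E]

section Incidence

def incidence (s : Sym2 V) (v : V) : ℕ :=
  if s = Sym2.diag v then 2 else if v ∈ s then 1 else 0

omit [Fintype V] in
theorem incidence_pos_iff {s : Sym2 V} {v : V} : 0 < incidence s v ↔ v ∈ s := by
  unfold incidence
  split_ifs with hdiag hmem
  · simp [hdiag, Sym2.diag]
  · simp [hmem]
  · simp [hmem]

theorem sum_incidence (s : Sym2 V) : ∑ v, incidence s v = 2 := by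
  induction s using Sym2.ind with
  | _ a b =>
    have hsplit : ∀ v,
        incidence s(a, b) v = (if v = a then 1 else 0) + (if v = b then 1 else 0) := by
      intro v
      by_cases hva : v = a <;> by_cases hvb : v = b <;>
        simp_all [incidence, Sym2.diag, eq_comm]
    simp [hsplit, sum_add_distrib]

end Incidence

section Degree

variable (G : Multigraph V E) {C D S : Finset E} {v a : V}

omit [DecidableEq E]

omit [Fintype V] in
theorem deg_eq_sum_incidence : G.deg C v = ∑ e ∈ C, incidence (G.ends e) v := rfl

theorem mem_vertsOf : v ∈ G.vertsOf C ↔ ∃ e ∈ C, v ∈ G.ends e := by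
  simp [vertsOf]

theorem vertsOf_mono (h : C ⊆ D) : G.vertsOf C ⊆ G.vertsOf D := fun v hv => by
  obtain ⟨e, he, hve⟩ := G.mem_vertsOf.1 hv
  exact G.mem_vertsOf.2 ⟨e, h he, hve⟩

theorem deg_pos_iff : 0 < G.deg C v ↔ v ∈ G.vertsOf C := by
  simp only [deg_eq_sum_incidence, sum_pos_iff, incidence_pos_iff, mem_vertsOf]

theorem deg_eq_zero_of_notMem (h : v ∉ G.vertsOf C) : G.deg C v = 0 :=
  Nat.eq_zero_of_not_pos (mt G.deg_pos_iff.1 h)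

omit [Fintype V] in
theorem deg_mono (h : C ⊆ D) : G.deg C v ≤ G.deg D v :=
  sum_le_sum_of_subset h

theorem sum_deg : ∑ v, G.deg C v = 2 * #C := by
  simp only [deg_eq_sum_incidence]
  rw [sum_comm]
  simp [sum_incidence, mul_comm]

theorem exists_odd_deg_ne (h : Odd (G.deg C a)) : ∃ b ≠ a, Odd (G.deg C b) := by
  by_contra! hev
  have hrest : Even (∑ v ∈ univ.erase a, G.deg C v) :=
    even_sum _ fun v hv => Nat.not_odd_iff_even.1 (hev v (ne_of_mem_erase hv))
  have htotal : Even (∑ v, G.deg C v) := by simp [sum_deg]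
  rw [← add_sum_erase _ _ (mem_univ a), Nat.even_add] at htotal
  exact Nat.not_even_iff_odd.2 h (htotal.2 hrest)

open scoped Classical in
noncomputable def componentEdges (S : Finset E) (a : V) : Finset E :=
  S.filter fun e => ∀ v ∈ G.ends e, G.ReachE S a v

theorem mem_componentEdges_iff {e : E} :
    e ∈ G.componentEdges S a ↔ e ∈ S ∧ ∀ v ∈ G.ends e, G.ReachE S a v := by
  simp only [componentEdges, mem_filter]

theorem mem_componentEdges {e : E} (he : e ∈ S) (hve : v ∈ G.ends e) (hav : G.ReachE S a v) :
    e ∈ G.componentEdges S a :=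
  G.mem_componentEdges_iff.2 ⟨he, fun _ hw => hav.tail ⟨e, he, hve, hw⟩⟩

theorem reachE_of_mem_componentEdges {e : E} (he : e ∈ G.componentEdges S a)
    (hv : v ∈ G.ends e) : G.ReachE S a v :=
  (G.mem_componentEdges_iff.1 he).2 v hv

theorem deg_componentEdges (hav : G.ReachE S a v) : G.deg (G.componentEdges S a) v = G.deg S v := by
  rw [deg_eq_sum_incidence, deg_eq_sum_incidence, componentEdges, sum_filter]
  refine sum_congr rfl fun e he => ?_
  split_ifs with hcomp
  · rfl
  · exact (Nat.eq_zero_of_not_pos fun hpos =>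
      hcomp fun _ hw => hav.tail ⟨e, he, incidence_pos_iff.1 hpos, hw⟩).symm

theorem exists_reachE_odd_deg (h : Odd (G.deg S a)) :
    ∃ b ≠ a, Odd (G.deg S b) ∧ G.ReachE S a b := by
  obtain ⟨b, hba, hb⟩ := G.exists_odd_deg_ne (C := G.componentEdges S a)
    (by rwa [G.deg_componentEdges .refl])
  obtain ⟨e, he, hbe⟩ := G.mem_vertsOf.1 (G.deg_pos_iff.1 hb.pos)
  have hab := G.reachE_of_mem_componentEdges he hbe
  exact ⟨b, hba, G.deg_componentEdges hab ▸ hb, hab⟩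

end Degree

variable {G : Multigraph V E} {C D P Q R S P₁ P₂ P₃ : Finset E} {u v w a b c : V}

omit [Fintype V] [DecidableEq V] [DecidableEq E] in
theorem ReachE.symm (h : G.ReachE C u w) : G.ReachE C w u :=
  Relation.ReflTransGen.mono (fun _ _ ⟨e, he, ha, hb⟩ => ⟨e, he, hb, ha⟩) _ _ h.swap

omit [Fintype V] [DecidableEq V] [DecidableEq E] in
theorem ReachE.mono (hCD : C ⊆ D) (h : G.ReachE C u w) : G.ReachE D u w :=
  Relation.ReflTransGen.mono (fun _ _ ⟨e, he, ha, hb⟩ => ⟨e, hCD he, ha, hb⟩) _ _ h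

omit [DecidableEq E] in
theorem IsPath.symm (h : G.IsPath P a b) : G.IsPath P b a := by
  obtain ⟨hab, hconn, ha, hb, hda, hdb, hinner⟩ := h
  exact ⟨hab.symm, hconn, hb, ha, hdb, hda, fun v hv hvb hva => hinner v hv hva hvb⟩

omit [DecidableEq E] in
theorem ThetaData.symm (h : G.ThetaData P₁ P₂ P₃ u w) : G.ThetaData P₁ P₂ P₃ w u := by
  obtain ⟨h₁, h₂, h₃, h₁₂, h₁₃, h₂₃, hv₁₂, hv₁₃, hv₂₃⟩ := h
  rw [pair_comm] at hv₁₂ hv₁₃ hv₂₃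
  exact ⟨h₁.symm, h₂.symm, h₃.symm, h₁₂, h₁₃, h₂₃, hv₁₂, hv₁₃, hv₂₃⟩

theorem vertsOf_union : G.vertsOf (C ∪ D) = G.vertsOf C ∪ G.vertsOf D := by
  ext v
  simp only [mem_vertsOf, mem_union, or_and_right, exists_or]

omit [Fintype V] in
theorem deg_union (h : Disjoint C D) : G.deg (C ∪ D) v = G.deg C v + G.deg D v :=
  sum_union h

omit [Fintype V] in
theorem deg_add_deg_sdiff (h : S ⊆ C) : G.deg S v + G.deg (C \ S) v = G.deg C v := by
  rw [← G.deg_union disjoint_sdiff, union_sdiff_of_subset h]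

theorem ConnectedOn.exists_shared_vertex (hC : G.ConnectedOn C) (hDC : D ⊆ C)
    (hD : D.Nonempty) (hCD : (C \ D).Nonempty) :
    ∃ v, ∃ e ∈ D, ∃ f ∈ C \ D, v ∈ G.ends e ∧ v ∈ G.ends f := by
  by_contra! hno
  have hclosed : ∀ a b, G.ReachE C a b → a ∈ G.vertsOf D → b ∈ G.vertsOf D := by
    intro a b h ha
    induction h with
    | refl => exact ha
    | tail _ hstep ih =>
      obtain ⟨g, hg, hg₁, hg₂⟩ := hstep
      obtain ⟨e, he, hme⟩ := G.mem_vertsOf.1 ih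
      by_cases hgD : g ∈ D
      · exact G.mem_vertsOf.2 ⟨g, hgD, hg₂⟩
      · exact absurd hg₁ (hno _ e he g (mem_sdiff.2 ⟨hg, hgD⟩) hme)
  obtain ⟨e, he⟩ := hD
  obtain ⟨f, hf⟩ := hCD
  have hv := Sym2.out_fst_mem (G.ends e)
  have hw := Sym2.out_fst_mem (G.ends f)
  have hreach := hC _ (G.mem_vertsOf.2 ⟨e, hDC he, hv⟩) _
    (G.mem_vertsOf.2 ⟨f, (mem_sdiff.1 hf).1, hw⟩)
  obtain ⟨e', he', hwe'⟩ := G.mem_vertsOf.1 (hclosed _ _ hreach (G.mem_vertsOf.2 ⟨e, he, hv⟩))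
  exact hno _ e' he' f hf hwe' hw

theorem ConnectedOn.of_boundary_reachE (hC : G.ConnectedOn C) (hSC : S ⊆ C)
    (ha : a ∈ G.vertsOf S)
    (hbd : ∀ v ∈ G.vertsOf S, v ∈ G.vertsOf (C \ S) → G.ReachE S a v) : G.ConnectedOn S := by
  suffices hS : S ⊆ G.componentEdges S a by
    have hall : ∀ v ∈ G.vertsOf S, G.ReachE S a v := fun v hv => by
      obtain ⟨e, he, hve⟩ := G.mem_vertsOf.1 hv
      exact G.reachE_of_mem_componentEdges (hS he) hve
    exact fun u hu w hw => (hall u hu).symm.trans (hall w hw)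
  -- otherwise the edges of `S` outside the component of `a` meet the rest of `C` at a vertex
  -- reachable from `a`
  by_contra hS
  obtain ⟨e₀, he₀, hae₀⟩ := G.mem_vertsOf.1 ha
  have he₀D : e₀ ∈ G.componentEdges S a := G.mem_componentEdges he₀ hae₀ .refl
  have hrest : (C \ (S \ G.componentEdges S a)).Nonempty :=
    ⟨e₀, mem_sdiff.2 ⟨hSC he₀, fun h => (mem_sdiff.1 h).2 he₀D⟩⟩
  obtain ⟨v, e, he, f, hf, hve, hvf⟩ :=
    hC.exists_shared_vertex (sdiff_subset.trans hSC) (sdiff_nonempty.2 hS) hrest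
  obtain ⟨heS, heD⟩ := mem_sdiff.1 he
  have hav : G.ReachE S a v := by
    obtain ⟨hfC, hfSD⟩ := mem_sdiff.1 hf
    by_cases hfS : f ∈ S
    · exact G.reachE_of_mem_componentEdges (not_not.1 fun h => hfSD (mem_sdiff.2 ⟨hfS, h⟩)) hvf
    · exact hbd v (G.mem_vertsOf.2 ⟨e, heS, hve⟩) (G.mem_vertsOf.2 ⟨f, mem_sdiff.2 ⟨hfC, hfS⟩, hvf⟩)
  exact heD (G.mem_componentEdges heS hve hav)

theorem ConnectedOn.union (hP : G.ConnectedOn P) (hQ : G.ConnectedOn Q) (hbP : b ∈ G.vertsOf P)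
    (hbQ : b ∈ G.vertsOf Q) : G.ConnectedOn (P ∪ Q) := by
  have hreach : ∀ v ∈ G.vertsOf (P ∪ Q), G.ReachE (P ∪ Q) v b := by
    intro v hv
    rw [vertsOf_union, mem_union] at hv
    rcases hv with hv | hv
    · exact (hP v hv b hbP).mono subset_union_left
    · exact (hQ v hv b hbQ).mono subset_union_right
  exact fun u hu w hw => (hreach u hu).trans (hreach w hw).symm

theorem IsPath.union (hP : G.IsPath P a b) (hQ : G.IsPath Q b c) (hPQ : Disjoint P Q)
    (hv : G.vertsOf P ∩ G.vertsOf Q = {b}) : G.IsPath (P ∪ Q) a c := by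
  obtain ⟨hab, hPc, haP, hbP, hPa, hPb, hPi⟩ := hP
  obtain ⟨hbc, hQc, hbQ, hcQ, hQb, hQc', hQi⟩ := hQ
  have hshared : ∀ v ∈ G.vertsOf P, v ∈ G.vertsOf Q → v = b := fun v h₁ h₂ =>
    mem_singleton.1 (hv ▸ mem_inter.2 ⟨h₁, h₂⟩)
  have haQ : a ∉ G.vertsOf Q := fun h => hab (hshared a haP h)
  have hcP : c ∉ G.vertsOf P := fun h => hbc (hshared c h hcQ).symm
  refine ⟨fun hac => hcP (hac ▸ haP), hPc.union hQc hbP hbQ,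
    G.vertsOf_union ▸ mem_union_left _ haP, G.vertsOf_union ▸ mem_union_right _ hcQ, ?_, ?_, ?_⟩
  · rw [G.deg_union hPQ, hPa, G.deg_eq_zero_of_notMem haQ]
  · rw [G.deg_union hPQ, hQc', G.deg_eq_zero_of_notMem hcP]
  · intro v hv hva hvc
    rw [G.deg_union hPQ]
    rcases eq_or_ne v b with rfl | hvb
    · rw [hPb, hQb]
    rw [vertsOf_union, mem_union] at hv
    rcases hv with hv | hv
    · rw [hPi v hv hva hvb, G.deg_eq_zero_of_notMem fun h => hvb (hshared v hv h)]
    · rw [hQi v hv hvb hvc, G.deg_eq_zero_of_notMem fun h => hvb (hshared v h hv)]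

theorem IsPath.union_isCycle (hP : G.IsPath P a b) (hQ : G.IsPath Q a b) (hPQ : Disjoint P Q)
    (hv : G.vertsOf P ∩ G.vertsOf Q = {a, b}) : G.IsCycle (P ∪ Q) := by
  obtain ⟨hab, hPc, haP, hbP, hPa, hPb, hPi⟩ := hP
  obtain ⟨-, hQc, haQ, hbQ, hQa, hQb, hQi⟩ := hQ
  have hshared : ∀ v ∈ G.vertsOf P, v ∈ G.vertsOf Q → v = a ∨ v = b := fun v h₁ h₂ => by
    simpa [hv] using mem_inter.2 ⟨h₁, h₂⟩
  obtain ⟨e, he, -⟩ := G.mem_vertsOf.1 haP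
  refine ⟨⟨e, mem_union_left _ he⟩, hPc.union hQc haP haQ, fun v hv => ?_⟩
  rw [G.deg_union hPQ]
  rcases eq_or_ne v a with rfl | hva
  · rw [hPa, hQa]
  rcases eq_or_ne v b with rfl | hvb
  · rw [hPb, hQb]
  rw [vertsOf_union, mem_union] at hv
  rcases hv with hv | hv
  · rw [hPi v hv hva hvb, G.deg_eq_zero_of_notMem fun h => (hshared v hv h).elim hva hvb]
  · rw [hQi v hv hva hvb, G.deg_eq_zero_of_notMem fun h => (hshared v h hv).elim hva hvb]

theorem isCycle_of_triangle (hP : G.IsPath P a b) (hQ : G.IsPath Q b c) (hR : G.IsPath R c a)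
    (hPQ : Disjoint P Q) (hPR : Disjoint P R) (hQR : Disjoint Q R)
    (hvPQ : G.vertsOf P ∩ G.vertsOf Q = {b}) (hvQR : G.vertsOf Q ∩ G.vertsOf R = {c})
    (hvRP : G.vertsOf R ∩ G.vertsOf P = {a}) : G.IsCycle (P ∪ Q ∪ R) := by
  refine (hP.union hQ hPQ hvPQ).union_isCycle hR.symm (disjoint_union_left.2 ⟨hPR, hQR⟩) ?_
  rw [G.vertsOf_union, union_inter_distrib_right, inter_comm (G.vertsOf P), hvRP, hvQR]
  exact (insert_eq a {c}).symm

theorem IsPath.not_isCycle_of_subset (hP : G.IsPath P a b) (hDP : D ⊆ P) : ¬ G.IsCycle D := by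
  rintro ⟨hD, -, hDdeg⟩
  obtain ⟨-, hPc, haP, -, hPa, hPb, hPi⟩ := hP
  have hinner : ∀ v ∈ G.vertsOf D, G.deg (P \ D) v = 0 := by
    intro v hv
    have h₂ : 2 ≤ G.deg P v := hDdeg v hv ▸ G.deg_mono hDP
    have hsplit := G.deg_add_deg_sdiff hDP (v := v)
    rcases eq_or_ne v a with rfl | hva
    · omega
    rcases eq_or_ne v b with rfl | hvb
    · omega
    rw [hPi v (G.vertsOf_mono hDP hv) hva hvb, hDdeg v hv] at hsplit
    omega
  have haD : a ∉ G.vertsOf D := fun h => by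
    have := G.deg_mono hDP (v := a)
    rw [hDdeg a h, hPa] at this
    omega
  obtain ⟨e, he, hae⟩ := G.mem_vertsOf.1 haP
  have hPD : (P \ D).Nonempty :=
    ⟨e, mem_sdiff.2 ⟨he, fun heD => haD (G.mem_vertsOf.2 ⟨e, heD, hae⟩)⟩⟩
  obtain ⟨v, f, hf, g, hg, hvf, hvg⟩ := hPc.exists_shared_vertex hDP hD hPD
  exact (G.deg_pos_iff.2 (G.mem_vertsOf.2 ⟨g, hg, hvg⟩)).ne'
    (hinner v (G.mem_vertsOf.2 ⟨f, hf, hvf⟩))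

theorem IsCycle.isPath_of_boundary (hC : G.IsCycle C) (hSC : S ⊆ C) (hS : S.Nonempty)
    (hCS : (C \ S).Nonempty) (hab : a ≠ b)
    (hbd : ∀ v ∈ G.vertsOf S, v ∈ G.vertsOf (C \ S) → v = a ∨ v = b) : G.IsPath S a b := by
  have hsum : ∀ v ∈ G.vertsOf S, G.deg S v + G.deg (C \ S) v = 2 := fun v hv => by
    rw [G.deg_add_deg_sdiff hSC, hC.2.2 v (G.vertsOf_mono hSC hv)]
  have hinner : ∀ v ∈ G.vertsOf S, v ≠ a → v ≠ b → G.deg S v = 2 := fun v hv hva hvb => by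
    simpa [G.deg_eq_zero_of_notMem fun h => (hbd v hv h).elim hva hvb] using hsum v hv
  have hodd : ∀ v, Odd (G.deg S v) → v = a ∨ v = b := by
    intro v hv
    by_contra! h
    rw [hinner v (G.deg_pos_iff.1 hv.pos) h.1 h.2] at hv
    exact Nat.not_odd_iff_even.2 even_two hv
  -- a vertex shared with the rest of the cycle has one edge on each side
  obtain ⟨v, e, he, f, hf, hve, hvf⟩ := hC.2.1.exists_shared_vertex hSC hS hCS
  have hvS := G.mem_vertsOf.2 ⟨e, he, hve⟩
  have hv : Odd (G.deg S v) := by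
    have h₁ := G.deg_pos_iff.2 hvS
    have h₂ := G.deg_pos_iff.2 (G.mem_vertsOf.2 ⟨f, hf, hvf⟩)
    exact ⟨0, by have := hsum v hvS; omega⟩
  obtain ⟨w, hwv, hw, hvw⟩ := G.exists_reachE_odd_deg hv
  obtain ⟨ha, hb, hreach⟩ : Odd (G.deg S a) ∧ Odd (G.deg S b) ∧ G.ReachE S a b := by
    rcases hodd v hv with rfl | rfl <;> rcases hodd w hw with rfl | rfl
    · exact absurd rfl hwv
    · exact ⟨hv, hw, hvw⟩
    · exact ⟨hw, hv, hvw.symm⟩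
    · exact absurd rfl hwv
  have hone : ∀ u, Odd (G.deg S u) → G.deg S u = 1 := fun u hu => by
    have := hsum u (G.deg_pos_iff.1 hu.pos)
    obtain ⟨k, hk⟩ := hu
    omega
  have haS := G.deg_pos_iff.1 ha.pos
  refine ⟨hab, hC.2.1.of_boundary_reachE hSC haS fun u hu hu' => ?_, haS,
    G.deg_pos_iff.1 hb.pos, hone a ha, hone b hb, hinner⟩
  rcases hbd u hu hu' with rfl | rfl
  · exact .refl
  · exact hreach

theorem ThetaData.isCycle_union (h : G.ThetaData P₁ P₂ P₃ u w) :
    G.IsCycle (P₁ ∪ P₂) ∧ G.IsCycle (P₁ ∪ P₃) ∧ G.IsCycle (P₂ ∪ P₃) := by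
  obtain ⟨h₁, h₂, h₃, h₁₂, h₁₃, h₂₃, hv₁₂, hv₁₃, hv₂₃⟩ := h
  exact ⟨h₁.union_isCycle h₂ h₁₂ hv₁₂, h₁.union_isCycle h₃ h₁₃ hv₁₃,
    h₂.union_isCycle h₃ h₂₃ hv₂₃⟩

theorem ThetaData.eq_or_eq_of_mem (h : G.ThetaData P₁ P₂ P₃ u w)
    (h₁₂ : v ∈ G.vertsOf (P₁ ∪ P₂)) (h₁₃ : v ∈ G.vertsOf (P₁ ∪ P₃))
    (h₂₃ : v ∈ G.vertsOf (P₂ ∪ P₃)) : v = u ∨ v = w := by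
  obtain ⟨-, -, -, -, -, -, hv₁₂, hv₁₃, hv₂₃⟩ := h
  have hpair : ∀ {X Y : Finset E}, G.vertsOf X ∩ G.vertsOf Y = {u, w} →
      v ∈ G.vertsOf X → v ∈ G.vertsOf Y → v = u ∨ v = w := fun hXY hX hY => by
    simpa [hXY] using mem_inter.2 ⟨hX, hY⟩
  simp only [vertsOf_union, mem_union] at h₁₂ h₁₃ h₂₃
  rcases h₁₂ with h₁ | h₂
  · rcases h₂₃ with h₂ | h₃
    · exact hpair hv₁₂ h₁ h₂
    · exact hpair hv₁₃ h₁ h₃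
  · rcases h₁₃ with h₁ | h₃
    · exact hpair hv₁₂ h₁ h₂
    · exact hpair hv₂₃ h₂ h₃

section Map

variable {W : Type} [Fintype W] [DecidableEq W] {H : Multigraph W E} {f : V → W}

omit [Fintype V] [Fintype W] in
theorem incidence_map (hf : Injective f) (s : Sym2 V) (v : V) :
    incidence (s.map f) (f v) = incidence s v := by
  have hdiag : s.map f = Sym2.diag (f v) ↔ s = Sym2.diag v := (Sym2.map.injective hf).eq_iff' rfl
  have hmem : f v ∈ s.map f ↔ v ∈ s := by
    rw [Sym2.mem_map]
    exact ⟨fun ⟨_, hw, h⟩ => hf h ▸ hw, fun h => ⟨v, h, rfl⟩⟩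
  simp only [incidence, hdiag, hmem]

omit [DecidableEq E]

variable (hf : Injective f) (hC : ∀ e ∈ C, H.ends e = (G.ends e).map f)
include hC

theorem vertsOf_eq_image : H.vertsOf C = (G.vertsOf C).image f := by
  ext z
  simp only [mem_vertsOf, mem_image]
  constructor
  · rintro ⟨e, he, hz⟩
    rw [hC e he, Sym2.mem_map] at hz
    obtain ⟨v, hv, rfl⟩ := hz
    exact ⟨v, ⟨e, he, hv⟩, rfl⟩
  · rintro ⟨v, ⟨e, he, hv⟩, rfl⟩
    exact ⟨e, he, hC e he ▸ Sym2.mem_map.2 ⟨v, hv, rfl⟩⟩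

include hf

omit [Fintype V] [Fintype W] in
theorem deg_map (v : V) : H.deg C (f v) = G.deg C v := by
  rw [deg_eq_sum_incidence, deg_eq_sum_incidence]
  exact sum_congr rfl fun e he => by rw [hC e he, incidence_map hf]

omit [Fintype V] [DecidableEq V] [Fintype W] [DecidableEq W] in
theorem reachE_map_iff : H.ReachE C (f u) (f w) ↔ G.ReachE C u w := by
  constructor
  · intro h
    suffices ∀ z, H.ReachE C (f u) z → ∃ w', f w' = z ∧ G.ReachE C u w' by
      obtain ⟨w', hw', hr⟩ := this _ h
      exact hf hw' ▸ hr
    intro z hz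
    induction hz with
    | refl => exact ⟨u, rfl, .refl⟩
    | tail _ hstep ih =>
      obtain ⟨m, rfl, hm⟩ := ih
      obtain ⟨e, he, h₁, h₂⟩ := hstep
      rw [hC e he, Sym2.mem_map] at h₁ h₂
      obtain ⟨p, hp, hpm⟩ := h₁
      obtain ⟨q, hq, rfl⟩ := h₂
      exact ⟨q, rfl, hm.tail ⟨e, he, hf hpm ▸ hp, hq⟩⟩
  · intro h
    induction h with
    | refl => exact .refl
    | tail _ hstep ih =>
      obtain ⟨e, he, h₁, h₂⟩ := hstep
      exact ih.tail ⟨e, he, hC e he ▸ Sym2.mem_map.2 ⟨_, h₁, rfl⟩,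
        hC e he ▸ Sym2.mem_map.2 ⟨_, h₂, rfl⟩⟩

theorem connectedOn_map_iff : H.ConnectedOn C ↔ G.ConnectedOn C := by
  simp only [ConnectedOn, vertsOf_eq_image hC, forall_mem_image, reachE_map_iff hf hC]

theorem isCycle_map_iff : H.IsCycle C ↔ G.IsCycle C := by
  simp only [IsCycle, connectedOn_map_iff hf hC, vertsOf_eq_image hC, forall_mem_image,
    deg_map hf hC]

theorem isPath_map_iff : H.IsPath C (f u) (f w) ↔ G.IsPath C u w := by
  simp only [IsPath, hf.ne_iff, connectedOn_map_iff hf hC, vertsOf_eq_image hC,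
    hf.mem_finset_image, forall_mem_image, deg_map hf hC]

end Map

def piece (part : E → Fin 3) (C : Finset E) (i : Fin 3) : Finset E :=
  C.filter fun e => part e = i

def pieceBalanced (Γ : Multigraph V E) (part : E → Fin 3) : Set (Finset E) :=
  {C | Γ.IsCycle C ∧ ∃ i, ∀ e ∈ C, part e = i}

def PiecesMeetOnlyAt (Γ : Multigraph V E) (part : E → Fin 3) (x y : V) : Prop :=
  ∀ e f, part e ≠ part f → ∀ u : V, u ∈ Γ.ends e → u ∈ Γ.ends f → u = x ∨ u = y

/-- Vertex `u` of piece `i` of `Γ`, seen in `H`: the hub `Sum.inr i` is where `y` of piece `i`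
meets `x` of piece `i + 1`. -/
def glue (x y : V) (i : Fin 3) (u : V) : V ⊕ Fin 3 :=
  if u = y then .inr i else if u = x then .inr (i - 1) else .inl u

def IsCyclicGluing (H : Multigraph (V ⊕ Fin 3) E) (Γ : Multigraph V E) (part : E → Fin 3)
    (x y : V) : Prop :=
  ∀ e, H.ends e = (Γ.ends e).map (glue x y (part e))

section Pieces

variable {part : E → Fin 3} {i j k : Fin 3}

omit [DecidableEq E] in
theorem mem_piece {e : E} : e ∈ piece part C i ↔ e ∈ C ∧ part e = i := mem_filter

omit [DecidableEq E] in
theorem piece_subset : piece part C i ⊆ C := filter_subset _ _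

omit [DecidableEq E] in
theorem disjoint_piece (h : i ≠ j) : Disjoint (piece part C i) (piece part C j) :=
  disjoint_filter.2 fun _ _ hi hj => h (hi.symm.trans hj)

theorem piece_subset_sdiff (h : i ≠ j) : piece part C j ⊆ C \ piece part C i :=
  subset_sdiff.2 ⟨piece_subset, (disjoint_piece h).symm⟩

theorem piece_union_piece_union_piece : piece part C 0 ∪ piece part C 1 ∪ piece part C 2 = C := by
  ext e
  have hcover : part e = 0 ∨ part e = 1 ∨ part e = 2 := by
    generalize part e = k
    fin_cases k <;> simp
  simp only [mem_union, mem_piece]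
  tauto

theorem sdiff_piece_nonempty (hC : ¬ ∃ i, ∀ e ∈ C, part e = i) : (C \ piece part C i).Nonempty := by
  by_contra h
  rw [not_nonempty_iff_eq_empty, sdiff_eq_empty_iff_subset] at h
  exact hC ⟨i, fun e he => (mem_piece.1 (h he)).2⟩

theorem piece_union_union_eq (hP : ∀ e ∈ P, part e = i) (hQ : ∀ e ∈ Q, part e = j)
    (hR : ∀ e ∈ R, part e = k) (hij : i ≠ j) (hik : i ≠ k) : piece part (P ∪ Q ∪ R) i = P := by
  ext e
  simp only [mem_piece, mem_union]
  refine ⟨fun ⟨he, hei⟩ => ?_, fun he => ⟨.inl (.inl he), hP e he⟩⟩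
  rcases he with (he | he) | he
  · exact he
  · exact absurd (hei.symm.trans (hQ e he)) hij
  · exact absurd (hei.symm.trans (hR e he)) hik

end Pieces

section FatTheta

variable {Γ : Multigraph V E} {part : E → Fin 3} {x y : V} {i j : Fin 3}

theorem PiecesMeetOnlyAt.boundary (hsep : PiecesMeetOnlyAt Γ part x y) :
    ∀ v ∈ Γ.vertsOf (piece part C i), v ∈ Γ.vertsOf (C \ piece part C i) → v = x ∨ v = y := by
  intro v hv hv'
  obtain ⟨e, he, hve⟩ := Γ.mem_vertsOf.1 hv
  obtain ⟨f, hf, hvf⟩ := Γ.mem_vertsOf.1 hv'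
  obtain ⟨hfC, hfi⟩ := mem_sdiff.1 hf
  refine hsep e f (fun h => hfi (mem_piece.2 ⟨hfC, ?_⟩)) v hve hvf
  rw [← h, (mem_piece.1 he).2]

theorem PiecesMeetOnlyAt.mem_vertsOf_of_notMem_pieceBalanced (hxy : x ≠ y)
    (hsep : PiecesMeetOnlyAt Γ part x y) (hC : Γ.IsCycle C) (hCB : C ∉ pieceBalanced Γ part) :
    x ∈ Γ.vertsOf C ∧ y ∈ Γ.vertsOf C := by
  obtain ⟨e, he⟩ := hC.1
  have hP := hC.isPath_of_boundary piece_subset ⟨e, mem_piece.2 ⟨he, rfl⟩⟩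
    (sdiff_piece_nonempty fun h => hCB ⟨hC, h⟩) hxy hsep.boundary
  exact ⟨Γ.vertsOf_mono piece_subset hP.2.2.1, Γ.vertsOf_mono piece_subset hP.2.2.2.1⟩

theorem PiecesMeetOnlyAt.exists_piece_of_isPath (hsep : PiecesMeetOnlyAt Γ part x y)
    (hP : Γ.IsPath P x y) : ∃ i, ∀ e ∈ P, part e = i := by
  obtain ⟨-, hconn, hxP, -, hdx, hdy, -⟩ := hP
  obtain ⟨e₀, he₀, -⟩ := Γ.mem_vertsOf.1 hxP
  refine ⟨part e₀, ?_⟩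
  by_contra hne
  obtain ⟨v, e, he, f, hf, hve, hvf⟩ := hconn.exists_shared_vertex piece_subset
    ⟨e₀, mem_piece.2 ⟨he₀, rfl⟩⟩ (sdiff_piece_nonempty fun h => hne (h.elim fun i hi e he =>
      (hi e he).trans (hi e₀ he₀).symm))
  have hv := Γ.mem_vertsOf.2 ⟨e, he, hve⟩
  have hv' := Γ.mem_vertsOf.2 ⟨f, hf, hvf⟩
  have hsplit := Γ.deg_add_deg_sdiff (piece_subset : piece part P (part e₀) ⊆ P) (v := v)
  have h₁ := Γ.deg_pos_iff.2 hv
  have h₂ := Γ.deg_pos_iff.2 hv'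
  rcases hsep.boundary v hv hv' with rfl | rfl <;> omega

theorem PiecesMeetOnlyAt.isTheta_of_pieces_isPath (hsep : PiecesMeetOnlyAt Γ part x y)
    (h : ∀ j, Γ.IsPath (piece part C j) x y) :
    Γ.IsTheta C ∧ ∀ D ⊆ C, Γ.IsCycle D → D ∉ pieceBalanced Γ part := by
  have hinter : ∀ i j, i ≠ j →
      Γ.vertsOf (piece part C i) ∩ Γ.vertsOf (piece part C j) = {x, y} := by
    intro i j hij
    refine Subset.antisymm (fun v hv => ?_) (insert_subset (mem_inter.2 ⟨(h i).2.2.1, (h j).2.2.1⟩)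
      (singleton_subset_iff.2 (mem_inter.2 ⟨(h i).2.2.2.1, (h j).2.2.2.1⟩)))
    obtain ⟨hvi, hvj⟩ := mem_inter.1 hv
    simpa using hsep.boundary v hvi (Γ.vertsOf_mono (piece_subset_sdiff hij) hvj)
  refine ⟨⟨x, y, _, _, _, ⟨h 0, h 1, h 2, disjoint_piece (by decide), disjoint_piece (by decide),
    disjoint_piece (by decide), hinter 0 1 (by decide), hinter 0 2 (by decide),
    hinter 1 2 (by decide)⟩, piece_union_piece_union_piece.symm⟩, ?_⟩
  rintro D hDC hD ⟨-, i, hi⟩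
  exact (h i).not_isCycle_of_subset (fun e he => mem_piece.2 ⟨hDC he, hi e he⟩) hD

theorem PiecesMeetOnlyAt.thetaData_of_notMem_pieceBalanced (hxy : x ≠ y)
    (hsep : PiecesMeetOnlyAt Γ part x y) (hT : Γ.ThetaData P₁ P₂ P₃ u w)
    (hu₁₂ : P₁ ∪ P₂ ∉ pieceBalanced Γ part) (hu₁₃ : P₁ ∪ P₃ ∉ pieceBalanced Γ part)
    (hu₂₃ : P₂ ∪ P₃ ∉ pieceBalanced Γ part) : Γ.ThetaData P₁ P₂ P₃ x y := by
  obtain ⟨hc₁₂, hc₁₃, hc₂₃⟩ := hT.isCycle_union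
  obtain ⟨hx₁₂, hy₁₂⟩ := hsep.mem_vertsOf_of_notMem_pieceBalanced hxy hc₁₂ hu₁₂
  obtain ⟨hx₁₃, hy₁₃⟩ := hsep.mem_vertsOf_of_notMem_pieceBalanced hxy hc₁₃ hu₁₃
  obtain ⟨hx₂₃, hy₂₃⟩ := hsep.mem_vertsOf_of_notMem_pieceBalanced hxy hc₂₃ hu₂₃
  rcases hT.eq_or_eq_of_mem hx₁₂ hx₁₃ hx₂₃ with rfl | rfl <;>
    rcases hT.eq_or_eq_of_mem hy₁₂ hy₁₃ hy₂₃ with rfl | rfl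
  exacts [absurd rfl hxy, hT, hT.symm, absurd rfl hxy]

theorem ne_of_union_notMem_pieceBalanced (hP : ∀ e ∈ P, part e = i) (hQ : ∀ e ∈ Q, part e = j)
    (hPQ : Γ.IsCycle (P ∪ Q)) (hu : P ∪ Q ∉ pieceBalanced Γ part) : i ≠ j := by
  rintro rfl
  exact hu ⟨hPQ, i, fun e he => (mem_union.1 he).elim (hP e) (hQ e)⟩

theorem PiecesMeetOnlyAt.pieces_isPath_of_isTheta (hxy : x ≠ y)
    (hsep : PiecesMeetOnlyAt Γ part x y) (hT : Γ.IsTheta C)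
    (hunb : ∀ D ⊆ C, Γ.IsCycle D → D ∉ pieceBalanced Γ part) :
    ∀ j, Γ.IsPath (piece part C j) x y := by
  obtain ⟨u, w, P₁, P₂, P₃, hT, rfl⟩ := hT
  obtain ⟨hc₁₂, hc₁₃, hc₂₃⟩ := hT.isCycle_union
  have hu₁₂ := hunb _ subset_union_left hc₁₂
  have hu₁₃ := hunb _ (union_subset (subset_union_left.trans subset_union_left)
    subset_union_right) hc₁₃
  have hu₂₃ := hunb _ (union_subset (subset_union_right.trans subset_union_left)
    subset_union_right) hc₂₃
  obtain ⟨hP₁, hP₂, hP₃, -⟩ := hsep.thetaData_of_notMem_pieceBalanced hxy hT hu₁₂ hu₁₃ hu₂₃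
  obtain ⟨i₁, h₁⟩ := hsep.exists_piece_of_isPath hP₁
  obtain ⟨i₂, h₂⟩ := hsep.exists_piece_of_isPath hP₂
  obtain ⟨i₃, h₃⟩ := hsep.exists_piece_of_isPath hP₃
  have h₁₂ := ne_of_union_notMem_pieceBalanced h₁ h₂ hc₁₂ hu₁₂
  have h₁₃ := ne_of_union_notMem_pieceBalanced h₁ h₃ hc₁₃ hu₁₃
  have h₂₃ := ne_of_union_notMem_pieceBalanced h₂ h₃ hc₂₃ hu₂₃
  intro j
  rcases (by decide : ∀ a b c j : Fin 3, a ≠ b → a ≠ c → b ≠ c → j = a ∨ j = b ∨ j = c)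
    i₁ i₂ i₃ j h₁₂ h₁₃ h₂₃ with rfl | rfl | rfl
  · rwa [piece_union_union_eq h₁ h₂ h₃ h₁₂ h₁₃]
  · rwa [union_comm P₁, piece_union_union_eq h₂ h₁ h₃ h₁₂.symm h₂₃]
  · rwa [union_comm, ← union_assoc, piece_union_union_eq h₃ h₁ h₂ h₁₃.symm h₂₃.symm]

theorem frameCircuit_iff_isCycle_of_subset_piece (hi : ∀ e ∈ C, part e = i) :
    Γ.FrameCircuit (pieceBalanced Γ part) C ↔ Γ.IsCycle C := by
  have hbal : ∀ D ⊆ C, Γ.IsCycle D → D ∈ pieceBalanced Γ part := fun D hDC hD =>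
    ⟨hD, i, fun e he => hi e (hDC he)⟩
  refine ⟨?_, fun hC => .inl ⟨hC, hbal C subset_rfl hC⟩⟩
  rintro (⟨hC, -⟩ | ⟨C₁, C₂, ⟨hC₁, -⟩, hC₁B, -, rfl⟩ | ⟨C₁, C₂, P, ⟨hC₁, -⟩, hC₁B, -, rfl⟩ |
    ⟨⟨u, w, P₁, P₂, P₃, hT, rfl⟩, hunb⟩)
  · exact hC
  · exact absurd (hbal C₁ subset_union_left hC₁) hC₁B
  · exact absurd (hbal C₁ (subset_union_left.trans subset_union_left) hC₁) hC₁B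
  · have hc₁₂ := hT.isCycle_union.1
    exact absurd (hbal _ subset_union_left hc₁₂) (hunb _ subset_union_left hc₁₂)

theorem PiecesMeetOnlyAt.frameCircuit_iff_pieces_isPath (hxy : x ≠ y)
    (hsep : PiecesMeetOnlyAt Γ part x y) (hC : ¬ ∃ i, ∀ e ∈ C, part e = i) :
    Γ.FrameCircuit (pieceBalanced Γ part) C ↔ ∀ j, Γ.IsPath (piece part C j) x y := by
  refine ⟨?_, fun h => .inr (.inr (.inr (hsep.isTheta_of_pieces_isPath h)))⟩
  rintro (⟨-, hCB⟩ | ⟨C₁, C₂, ⟨hC₁, hC₂, -, hcard⟩, hC₁B, hC₂B, rfl⟩ |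
    ⟨C₁, C₂, P, ⟨hC₁, hC₂, hdisj, -⟩, hC₁B, hC₂B, rfl⟩ | ⟨hT, hunb⟩)
  · exact absurd hCB.2 hC
  · obtain ⟨hx₁, hy₁⟩ := hsep.mem_vertsOf_of_notMem_pieceBalanced hxy hC₁ hC₁B
    obtain ⟨hx₂, hy₂⟩ := hsep.mem_vertsOf_of_notMem_pieceBalanced hxy hC₂ hC₂B
    have hle := card_le_card (insert_subset (mem_inter.2 ⟨hx₁, hx₂⟩)
      (singleton_subset_iff.2 (mem_inter.2 ⟨hy₁, hy₂⟩)))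
    rw [hcard, card_pair hxy] at hle
    omega
  · exact absurd (hsep.mem_vertsOf_of_notMem_pieceBalanced hxy hC₂ hC₂B).1
      (disjoint_left.1 hdisj (hsep.mem_vertsOf_of_notMem_pieceBalanced hxy hC₁ hC₁B).1)
  · exact hsep.pieces_isPath_of_isTheta hxy hT hunb

end FatTheta

section Gluing

variable {Γ : Multigraph V E} {part : E → Fin 3} {x y : V} {H : Multigraph (V ⊕ Fin 3) E}
  {e f : E} {i j k : Fin 3} {u v : V} {z : V ⊕ Fin 3}

omit [Fintype V] [DecidableEq E]

theorem glue_injective (i : Fin 3) : Injective (glue x y i) := by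
  intro a b hab
  have hsub : i - 1 ≠ i := (by decide : ∀ k : Fin 3, k - 1 ≠ k) i
  unfold glue at hab
  split_ifs at hab <;> simp_all [eq_comm]

theorem glue_x (hxy : x ≠ y) : glue x y i x = .inr (i - 1) := by
  simp [glue, hxy]

theorem glue_y : glue x y i y = .inr i := by
  simp [glue]

theorem glue_eq_inl_iff : glue x y i u = .inl v ↔ u = v ∧ v ≠ x ∧ v ≠ y := by
  unfold glue
  split_ifs <;> aesop

theorem IsCyclicGluing.mem_ends_iff (hH : IsCyclicGluing H Γ part x y) :
    z ∈ H.ends e ↔ ∃ u ∈ Γ.ends e, glue x y (part e) u = z := by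
  rw [hH e, Sym2.mem_map]

theorem IsCyclicGluing.ends_eq_map (hH : IsCyclicGluing H Γ part x y)
    (hi : ∀ e ∈ C, part e = i) : ∀ e ∈ C, H.ends e = (Γ.ends e).map (glue x y i) :=
  fun e he => hi e he ▸ hH e

theorem IsCyclicGluing.part_eq_of_inr_mem_ends (hH : IsCyclicGluing H Γ part x y)
    (h : .inr k ∈ H.ends e) : part e = k ∨ part e = k + 1 := by
  obtain ⟨u, -, hu⟩ := hH.mem_ends_iff.1 h
  unfold glue at hu
  split_ifs at hu <;> simp only [Sum.inr.injEq] at hu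
  · exact .inl hu
  · exact .inr (by rw [← hu, sub_add_cancel])

theorem IsCyclicGluing.eq_hub_of_mem_ends (hsep : PiecesMeetOnlyAt Γ part x y)
    (hH : IsCyclicGluing H Γ part x y) (hef : part e ≠ part f) (he : z ∈ H.ends e)
    (hf : z ∈ H.ends f) : z = .inr (part e - 1) ∨ z = .inr (part e) := by
  obtain ⟨u, hu, rfl⟩ := hH.mem_ends_iff.1 he
  obtain ⟨u', hu', hu'u⟩ := hH.mem_ends_iff.1 hf
  by_cases huy : u = y
  · exact .inr (by rw [huy, glue_y])
  by_cases hux : u = x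
  · exact .inl (by rw [hux, glue_x fun h => huy (hux.trans h)])
  obtain ⟨rfl, -⟩ := glue_eq_inl_iff.1 (hu'u.trans (glue_eq_inl_iff.2 ⟨rfl, hux, huy⟩))
  exact ((hsep e f hef u' hu hu').elim hux huy).elim

end Gluing

section Gluing

variable {Γ : Multigraph V E} {part : E → Fin 3} {x y : V} {H : Multigraph (V ⊕ Fin 3) E}
  {j : Fin 3}

omit [DecidableEq E] in
theorem IsCyclicGluing.isCycle_iff (hH : IsCyclicGluing H Γ part x y)
    (hi : ∀ e ∈ C, part e = i) : H.IsCycle C ↔ Γ.IsCycle C :=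
  isCycle_map_iff (glue_injective i) (hH.ends_eq_map hi)

omit [DecidableEq E] in
theorem IsCyclicGluing.isPath_piece_iff (hxy : x ≠ y) (hH : IsCyclicGluing H Γ part x y) :
    H.IsPath (piece part C j) (.inr (j - 1)) (.inr j) ↔ Γ.IsPath (piece part C j) x y := by
  rw [← glue_x hxy, ← glue_y (x := x) (y := y)]
  exact isPath_map_iff (glue_injective j) (hH.ends_eq_map fun _ he => (mem_piece.1 he).2)

theorem IsCyclicGluing.boundary (hsep : PiecesMeetOnlyAt Γ part x y)
    (hH : IsCyclicGluing H Γ part x y) :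
    ∀ z ∈ H.vertsOf (piece part C j), z ∈ H.vertsOf (C \ piece part C j) →
      z = .inr (j - 1) ∨ z = .inr j := by
  intro z hz hz'
  obtain ⟨e, he, hze⟩ := H.mem_vertsOf.1 hz
  obtain ⟨f, hf, hzf⟩ := H.mem_vertsOf.1 hz'
  obtain ⟨hfC, hfj⟩ := mem_sdiff.1 hf
  obtain ⟨-, rfl⟩ := mem_piece.1 he
  exact hH.eq_hub_of_mem_ends hsep (fun h => hfj (mem_piece.2 ⟨hfC, h.symm⟩)) hze hzf

theorem IsCyclicGluing.pieces_isPath_of_isCycle (hxy : x ≠ y) (hsep : PiecesMeetOnlyAt Γ part x y)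
    (hH : IsCyclicGluing H Γ part x y) (hC : ¬ ∃ i, ∀ e ∈ C, part e = i) (hHC : H.IsCycle C) :
    ∀ j, Γ.IsPath (piece part C j) x y := by
  have hpath : ∀ j, (piece part C j).Nonempty → Γ.IsPath (piece part C j) x y := fun j hj =>
    (hH.isPath_piece_iff hxy).1 (hHC.isPath_of_boundary piece_subset hj (sdiff_piece_nonempty hC)
      (Sum.inr_injective.ne ((by decide : ∀ k : Fin 3, k - 1 ≠ k) j)) (hH.boundary hsep))
  -- the hub `inr j` has one edge in piece `j`, so its other edge lies in piece `j + 1`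
  have hstep : ∀ j, (piece part C j).Nonempty → (piece part C (j + 1)).Nonempty := by
    intro j hj
    obtain ⟨-, -, -, hjP, -, hdeg, -⟩ := (hH.isPath_piece_iff hxy).2 (hpath j hj)
    have hsplit := H.deg_add_deg_sdiff (piece_subset : piece part C j ⊆ C) (v := .inr j)
    rw [hdeg, hHC.2.2 _ (H.vertsOf_mono piece_subset hjP)] at hsplit
    obtain ⟨f, hf, hjf⟩ := H.mem_vertsOf.1 (H.deg_pos_iff.1 (by omega :
      0 < H.deg (C \ piece part C j) (.inr j)))
    obtain ⟨hfC, hfj⟩ := mem_sdiff.1 hf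
    exact ⟨f, mem_piece.2 ⟨hfC, (hH.part_eq_of_inr_mem_ends hjf).resolve_left
      fun h => hfj (mem_piece.2 ⟨hfC, h⟩)⟩⟩
  obtain ⟨e, he⟩ := hHC.1
  have he' : (piece part C (part e)).Nonempty := ⟨e, mem_piece.2 ⟨he, rfl⟩⟩
  intro j
  rcases (by decide : ∀ k j : Fin 3, j = k ∨ j = k + 1 ∨ j = k + 1 + 1) (part e) j
    with rfl | rfl | rfl
  exacts [hpath _ he', hpath _ (hstep _ he'), hpath _ (hstep _ (hstep _ he'))]

theorem IsCyclicGluing.isCycle_of_pieces_isPath (hxy : x ≠ y) (hsep : PiecesMeetOnlyAt Γ part x y)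
    (hH : IsCyclicGluing H Γ part x y) (h : ∀ j, Γ.IsPath (piece part C j) x y) :
    H.IsCycle C := by
  have hP : ∀ j, H.IsPath (piece part C j) (.inr (j - 1)) (.inr j) := fun j =>
    (hH.isPath_piece_iff hxy).2 (h j)
  have hinter : ∀ j, H.vertsOf (piece part C j) ∩ H.vertsOf (piece part C (j + 1)) = {.inr j} := by
    intro j
    refine Subset.antisymm (fun z hz => ?_) (singleton_subset_iff.2
      (mem_inter.2 ⟨(hP j).2.2.2.1, by simpa using (hP (j + 1)).2.2.1⟩))
    obtain ⟨hz₁, hz₂⟩ := mem_inter.1 hz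
    have hj : j ≠ j + 1 := (by decide : ∀ k : Fin 3, k ≠ k + 1) j
    have h₁ := hH.boundary hsep z hz₁ (H.vertsOf_mono (piece_subset_sdiff hj) hz₂)
    have h₂ := hH.boundary hsep z hz₂ (H.vertsOf_mono (piece_subset_sdiff hj.symm) hz₁)
    rcases h₁ with rfl | rfl
    · simp only [add_sub_cancel_right, Sum.inr.injEq] at h₂
      exact absurd h₂ ((by decide : ∀ k : Fin 3, ¬(k - 1 = k ∨ k - 1 = k + 1)) j)
    · exact mem_singleton_self _
  rw [← piece_union_piece_union_piece (part := part) (C := C)]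
  exact H.isCycle_of_triangle (hP 0) (hP 1) (hP 2) (disjoint_piece (by decide))
    (disjoint_piece (by decide)) (disjoint_piece (by decide)) (hinter 0) (hinter 1) (hinter 2)

end Gluing

end Multigraph

theorem fat_theta_frame_eq_cycle_general (Γ : Multigraph V E) (x y : V) (hxy : x ≠ y)
    (part : E → Fin 3)
    (hsep : ∀ e f, part e ≠ part f →
      ∀ u : V, u ∈ Γ.ends e → u ∈ Γ.ends f → u = x ∨ u = y)
    (B : Set (Finset E))
    (hB : B = {C : Finset E | Γ.IsCycle C ∧ ∃ i, ∀ e ∈ C, part e = i})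
    (H : Multigraph (V ⊕ Fin 3) E)
    (hH : ∀ e, H.ends e = Sym2.map
      (fun u => if u = y then Sum.inr (part e)
        else if u = x then Sum.inr (part e - 1) else Sum.inl u) (Γ.ends e)) :
    ∀ C : Finset E, Γ.FrameCircuit B C ↔ H.IsCycle C := by
  have hsep : Γ.PiecesMeetOnlyAt part x y := hsep
  have hH : H.IsCyclicGluing Γ part x y := hH
  subst hB
  intro C
  by_cases hC : ∃ i, ∀ e ∈ C, part e = i
  · obtain ⟨i, hi⟩ := hC
    exact (Multigraph.frameCircuit_iff_isCycle_of_subset_piece hi).trans (hH.isCycle_iff hi).symm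
  · exact (hsep.frameCircuit_iff_pieces_isPath hxy hC).trans
      ⟨hH.isCycle_of_pieces_isPath hxy hsep, hH.pieces_isPath_of_isCycle hxy hsep hC⟩

/-- A fat theta: `Γ` is formed from three pieces sharing only the
two vertices `x, y`, balanced cycles being those within a single piece; `H` is
formed from the pieces by identifying `y` of piece `i` with `x` of piece `i+1`
(to `w i`, indices mod 3).  Then `F(Ω) = M(H)`. -/
theorem fat_theta_frame_eq_cycle (Γ : Multigraph V E) (x y : V) (hxy : x ≠ y)
    (part : E → Fin 3)
    (hsep : ∀ e f, part e ≠ part f →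
      ∀ u : V, u ∈ Γ.ends e → u ∈ Γ.ends f → u = x ∨ u = y)
    (hne : ∀ i : Fin 3, ∃ e, part e = i)
    (B : Set (Finset E))
    (hB : B = {C : Finset E | Γ.IsCycle C ∧ ∃ i, ∀ e ∈ C, part e = i})
    (H : Multigraph (V ⊕ Fin 3) E)
    (hH : ∀ e, H.ends e = Sym2.map
      (fun u => if u = y then Sum.inr (part e)
        else if u = x then Sum.inr (part e - 1) else Sum.inl u) (Γ.ends e)) :
    ∀ C : Finset E, Γ.FrameCircuit B C ↔ H.IsCycle C :=
  fat_theta_frame_eq_cycle_general Γ x y hxy part hsep B hB H hH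
end

section
/- Suppose a signed graph Ω on underlying graph Γ is obtained from a graph H by a 4-twisting, and M(G) = L(Ω) for some graph G. Then the edge set of every cycle of H induces a connected subgraph of Γ. -/
/-!
Splitting `x`, `y`, `z` turns `Γ` into `H`. Let `C` be a cycle of `H` and `K` a component of `C`
in `Γ` other than the whole of `C`; since `C` is connected in `H`, some edge of `K` shares a
split copy `w` of a vertex `a` with an edge outside `K`. If `a` were the only one of `x`, `y`, `z`
met by `K`, the edges of `K` attached like that edge would form a subgraph of `C` whose only
vertex of odd degree is `w`, contradicting the handshake lemma. So every such component meets two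
of the three vertices, and two components would have to share one.
-/

namespace Multigraph

section Degree

variable {V E : Type} [DecidableEq V] {G : Multigraph V E} {C D : Finset E} {v : V}

lemma sum_ite_diag_ite_mem_eq_two [Fintype V] (z : Sym2 V) :
    ∑ v : V, (if z = Sym2.diag v then 2 else if v ∈ z then 1 else 0) = 2 := by
  induction z using Sym2.ind with
  | _ a b =>
    rcases eq_or_ne a b with rfl | hab
    · rw [Finset.sum_eq_single a] <;> simp +contextual [Sym2.diag, eq_comm]
    · have hdiag : ∀ v, s(a, b) ≠ Sym2.diag v := fun v h => hab <| by
        simp only [Sym2.diag, Sym2.eq_iff, or_self] at h; rw [h.1, h.2]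
      simp only [hdiag, if_false, Sym2.mem_iff]
      rw [Finset.sum_boole]
      simp [Finset.filter_or, Finset.filter_eq', Finset.card_pair hab]

lemma sum_deg_s12 [Fintype V] (G : Multigraph V E) (D : Finset E) :
    ∑ v, G.deg D v = 2 * D.card := by
  simp only [deg]
  rw [Finset.sum_comm, Finset.sum_congr rfl fun e _ => sum_ite_diag_ite_mem_eq_two (G.ends e)]
  simp [mul_comm]

lemma ite_diag_ite_mem_eq_zero_iff {z : Sym2 V} :
    (if z = Sym2.diag v then 2 else if v ∈ z then 1 else 0) = 0 ↔ v ∉ z := by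
  by_cases hz : z = Sym2.diag v
  · simp [hz, Sym2.diag]
  · simp [hz]

lemma deg_eq_zero (h : ∀ e ∈ D, v ∉ G.ends e) : G.deg D v = 0 :=
  Finset.sum_eq_zero fun e he => ite_diag_ite_mem_eq_zero_iff.2 (h e he)

lemma one_le_deg {e : E} (he : e ∈ D) (hv : v ∈ G.ends e) : 1 ≤ G.deg D v :=
  Nat.one_le_iff_ne_zero.2 fun h0 =>
    ite_diag_ite_mem_eq_zero_iff.1 ((Finset.sum_eq_zero_iff.1 h0) e he) hv

lemma deg_eq_of_subset (hDC : D ⊆ C) (h : ∀ e ∈ C, v ∈ G.ends e → e ∈ D) :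
    G.deg D v = G.deg C v :=
  Finset.sum_subset hDC fun e heC heD =>
    ite_diag_ite_mem_eq_zero_iff.2 fun hv => heD (h e heC hv)

lemma deg_sdiff_add_deg [DecidableEq E] (hDC : D ⊆ C) :
    G.deg (C \ D) v + G.deg D v = G.deg C v :=
  Finset.sum_sdiff hDC

lemma even_deg_of_closed_outside [Fintype V] (hDC : D ⊆ C) (s : V)
    (hC : ∀ v ∈ G.vertsOf C, Even (G.deg C v))
    (hclosed : ∀ e ∈ C, ∀ f ∈ D, ∀ v ≠ s, v ∈ G.ends e → v ∈ G.ends f → e ∈ D) :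
    Even (G.deg D s) := by
  have hothers : ∀ v ∈ Finset.univ.erase s, Even (G.deg D v) := by
    intro v hv
    by_cases hvD : ∃ f ∈ D, v ∈ G.ends f
    · obtain ⟨f, hfD, hvf⟩ := hvD
      rw [deg_eq_of_subset hDC fun e he hve =>
        hclosed e he f hfD v (Finset.ne_of_mem_erase hv) hve hvf]
      exact hC v (Finset.mem_filter.2 ⟨Finset.mem_univ _, f, hDC hfD, hvf⟩)
    · push Not at hvD
      rw [deg_eq_zero hvD]
      exact Even.zero
  have hsum := sum_deg_s12 G D
  rw [← Finset.add_sum_erase _ _ (Finset.mem_univ s)] at hsum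
  exact (Nat.even_add.1 (hsum ▸ even_two_mul _)).2 (Finset.even_sum _ hothers)

lemma IsCycle.mem_of_closed_outside [Fintype V] [DecidableEq E] (hC : G.IsCycle C)
    (hDC : D ⊆ C) {s : V}
    (hclosed : ∀ e ∈ C, ∀ f ∈ D, ∀ v ≠ s, v ∈ G.ends e → v ∈ G.ends f → e ∈ D)
    {e f : E} (he : e ∈ D) (hf : f ∈ C) (hse : s ∈ G.ends e) (hsf : s ∈ G.ends f) : f ∈ D := by
  by_contra hfD
  have hdeg2 : ∀ v ∈ G.vertsOf C, G.deg C v = 2 := hC.2.2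
  have hevenD := even_deg_of_closed_outside hDC s (fun v hv => hdeg2 v hv ▸ even_two) hclosed
  have hD := one_le_deg he hse
  have hCD := one_le_deg (Finset.mem_sdiff.2 ⟨hf, hfD⟩) hsf
  have hsum := deg_sdiff_add_deg (G := G) (v := s) hDC
  rw [hdeg2 s (Finset.mem_filter.2 ⟨Finset.mem_univ _, e, hDC he, hse⟩)] at hsum
  obtain ⟨k, hk⟩ := hevenD
  omega

end Degree

section Linked

variable {V E : Type} {G : Multigraph V E} {C : Finset E} {e f g : E}

lemma reachE_symm {u w : V} (h : G.ReachE C u w) : G.ReachE C w u :=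
  (@Relation.ReflTransGen.stdSymm _ _ ⟨fun _ _ ⟨e, he, ha, hb⟩ => ⟨e, he, hb, ha⟩⟩).symm _ _ h

def Linked (G : Multigraph V E) (C : Finset E) (e f : E) : Prop :=
  ∃ p ∈ G.ends e, ∃ q ∈ G.ends f, G.ReachE C p q

lemma linked_of_mem_ends {v : V} (he : v ∈ G.ends e) (hf : v ∈ G.ends f) : G.Linked C e f :=
  ⟨v, he, v, hf, .refl⟩

lemma Linked.refl (e : E) : G.Linked C e e :=
  linked_of_mem_ends (Sym2.out_fst_mem (G.ends e)) (Sym2.out_fst_mem (G.ends e))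

lemma Linked.symm (h : G.Linked C e f) : G.Linked C f e :=
  let ⟨p, hp, q, hq, hpq⟩ := h
  ⟨q, hq, p, hp, reachE_symm hpq⟩

lemma Linked.trans (hf : f ∈ C) (hef : G.Linked C e f) (hfg : G.Linked C f g) :
    G.Linked C e g :=
  let ⟨p, hp, _, hq, hpq⟩ := hef
  let ⟨_, hq', r, hr, hq'r⟩ := hfg
  ⟨p, hp, r, hr, (hpq.tail ⟨f, hf, hq, hq'⟩).trans hq'r⟩

lemma connectedOn_of_linked [Fintype V] [DecidableEq V]
    (h : ∀ e ∈ C, ∀ f ∈ C, G.Linked C e f) : G.ConnectedOn C := by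
  intro u hu w hw
  obtain ⟨-, e, he, hue⟩ := Finset.mem_filter.1 hu
  obtain ⟨-, f, hf, hwf⟩ := Finset.mem_filter.1 hw
  obtain ⟨p, hp, q, hq, hpq⟩ := h e he f hf
  exact ((Relation.ReflTransGen.single ⟨e, he, hue, hp⟩).trans hpq).tail ⟨f, hf, hq, hwf⟩

lemma ConnectedOn.exists_shared_vertex_across [Fintype V] [DecidableEq V]
    (hC : G.ConnectedOn C) {P : E → Prop} (hg : g ∈ C) (hf : f ∈ C) (hPg : P g) (hPf : ¬P f) :
    ∃ e ∈ C, ∃ e' ∈ C, P e ∧ ¬P e' ∧ ∃ v, v ∈ G.ends e ∧ v ∈ G.ends e' := by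
  have hq := Sym2.out_fst_mem (G.ends f)
  suffices ∀ p, G.ReachE C p (G.ends f).out.1 → ∀ g ∈ C, p ∈ G.ends g → P g →
      ∃ e ∈ C, ∃ e' ∈ C, P e ∧ ¬P e' ∧ ∃ v, v ∈ G.ends e ∧ v ∈ G.ends e' from
    this _ (hC _ (Finset.mem_filter.2 ⟨Finset.mem_univ _, g, hg, Sym2.out_fst_mem _⟩) _
      (Finset.mem_filter.2 ⟨Finset.mem_univ _, f, hf, hq⟩)) g hg (Sym2.out_fst_mem _) hPg
  intro p hp
  induction hp using Relation.ReflTransGen.head_induction_on with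
  | refl => exact fun g hg hqg hPg => ⟨g, hg, f, hf, hPg, hPf, _, hqg, hq⟩
  | head hstep _ ih =>
    obtain ⟨k, hk, hpk, hmk⟩ := hstep
    intro g hg hpg hPg
    by_cases hPk : P k
    · exact ih k hk hmk hPk
    · exact ⟨g, hg, k, hk, hPg, hPk, _, hpg, hpk⟩

end Linked

section Split

variable {V E ι : Type} [DecidableEq V] {Γ : Multigraph V E} {H : Multigraph (V ⊕ ι) E}
  {S : Finset V} {att : E → V → ι}

/-- Splitting each vertex of `S` into copies indexed by `ι`: an edge with attachment `a` has its
end `u ∈ S` moved to the copy `a u`. -/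
def splitVertex (S : Finset V) (a : V → ι) (u : V) : V ⊕ ι :=
  if u ∈ S then .inr (a u) else .inl u

lemma inl_mem_ends_iff (hH : ∀ e, H.ends e = (Γ.ends e).map (splitVertex S (att e))) {e : E}
    {v : V} : Sum.inl v ∈ H.ends e ↔ v ∈ Γ.ends e ∧ v ∉ S := by
  rw [hH, Sym2.mem_map]
  constructor
  · rintro ⟨u, hu, hsplit⟩
    by_cases huS : u ∈ S <;> simp only [splitVertex, huS, if_true, if_false, reduceCtorEq,
      Sum.inl.injEq] at hsplit
    exact hsplit ▸ ⟨hu, huS⟩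
  · rintro ⟨hv, hvS⟩
    exact ⟨v, hv, if_neg hvS⟩

lemma inr_mem_ends_iff (hH : ∀ e, H.ends e = (Γ.ends e).map (splitVertex S (att e))) {e : E}
    {i : ι} : Sum.inr i ∈ H.ends e ↔ ∃ u ∈ Γ.ends e, u ∈ S ∧ att e u = i := by
  rw [hH, Sym2.mem_map]
  refine exists_congr fun u => and_congr_right fun _ => ?_
  by_cases huS : u ∈ S <;> simp [splitVertex, huS]

open Classical in
noncomputable def componentAttachments (Γ : Multigraph V E) (C : Finset E) (S : Finset V)
    (e : E) : Finset V :=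
  S.filter fun u => ∃ g ∈ C, Γ.Linked C e g ∧ u ∈ Γ.ends g

lemma mem_componentAttachments {C : Finset E} {e : E} {u : V} :
    u ∈ Γ.componentAttachments C S e ↔ u ∈ S ∧ ∃ g ∈ C, Γ.Linked C e g ∧ u ∈ Γ.ends g := by
  classical
  exact Finset.mem_filter

lemma disjoint_componentAttachments {e f : E} (hef : ¬Γ.Linked C e f) :
    Disjoint (Γ.componentAttachments C S e) (Γ.componentAttachments C S f) := by
  refine Finset.disjoint_left.2 fun u hue huf => hef ?_
  obtain ⟨-, g, hg, heg, hug⟩ := mem_componentAttachments.1 hue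
  obtain ⟨-, g', hg', hfg', hug'⟩ := mem_componentAttachments.1 huf
  exact (heg.trans hg (linked_of_mem_ends hug hug')).trans hg' hfg'.symm

lemma one_lt_card_componentAttachments [Fintype V] [Fintype ι] [DecidableEq ι]
    (hH : ∀ e, H.ends e = (Γ.ends e).map (splitVertex S (att e)))
    (hatt : ∀ e f u, u ∈ Γ.ends e → u ∈ Γ.ends f → u ∉ S → att e = att f)
    {C : Finset E} (hC : H.IsCycle C) {g₀ f₀ : E} (hg₀ : g₀ ∈ C) (hf₀ : f₀ ∈ C)
    (hnot : ¬Γ.Linked C g₀ f₀) : 1 < (Γ.componentAttachments C S g₀).card := by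
  classical
  obtain ⟨e₁, he₁, f₁, hf₁, hlinked₁, hnot₁, w, hwe, hwf⟩ :=
    hC.2.1.exists_shared_vertex_across (P := Γ.Linked C g₀) hg₀ hf₀ (.refl g₀) hnot
  cases w with
  | inl v =>
    exact absurd (hlinked₁.trans he₁ (linked_of_mem_ends ((inl_mem_ends_iff hH).1 hwe).1
      ((inl_mem_ends_iff hH).1 hwf).1)) hnot₁
  | inr i =>
    obtain ⟨a, haE, haS, hai⟩ := (inr_mem_ends_iff hH).1 hwe
    have ha : a ∈ Γ.componentAttachments C S g₀ :=
      mem_componentAttachments.2 ⟨haS, e₁, he₁, hlinked₁, haE⟩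
    rw [Finset.one_lt_card]
    by_contra! honly
    have honly' : ∀ g ∈ C, Γ.Linked C g₀ g → ∀ u ∈ Γ.ends g, u ∈ S → u = a :=
      fun g hg hlinked u hu huS =>
        (honly a ha u (mem_componentAttachments.2 ⟨huS, g, hg, hlinked, hu⟩)).symm
    -- `D` is closed in `C` away from `inr i`, so by parity it contains every edge of `C` at
    -- `inr i`, including `f₁`.
    let D := C.filter fun g => Γ.Linked C g₀ g ∧ att g = att e₁
    refine hnot₁ (Finset.mem_filter.1 (hC.mem_of_closed_outside (D := D)
      (Finset.filter_subset _ _) ?_ (Finset.mem_filter.2 ⟨he₁, hlinked₁, rfl⟩) hf₁ hwe hwf)).2.1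
    intro e he f hfD v hv hve hvf
    obtain ⟨hfC, hlinked, hattf⟩ := Finset.mem_filter.1 hfD
    cases v with
    | inl v =>
      obtain ⟨hve', hvS⟩ := (inl_mem_ends_iff hH).1 hve
      obtain ⟨hvf', -⟩ := (inl_mem_ends_iff hH).1 hvf
      exact Finset.mem_filter.2 ⟨he, hlinked.trans hfC (linked_of_mem_ends hvf' hve'),
        (hatt e f v hve' hvf' hvS).trans hattf⟩
    | inr j =>
      obtain ⟨u, hu, huS, huj⟩ := (inr_mem_ends_iff hH).1 hvf
      obtain rfl := honly' f hfC hlinked u hu huS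
      exact absurd (by rw [← huj, ← hai, hattf]) hv

theorem connectedOn_of_isCycle_split [Fintype V] [Fintype ι] [DecidableEq ι] (hS : S.card ≤ 3)
    (hH : ∀ e, H.ends e = (Γ.ends e).map (splitVertex S (att e)))
    (hatt : ∀ e f u, u ∈ Γ.ends e → u ∈ Γ.ends f → u ∉ S → att e = att f)
    {C : Finset E} (hC : H.IsCycle C) : Γ.ConnectedOn C := by
  refine connectedOn_of_linked fun e he f hf => by_contra fun hef => ?_
  have he2 := one_lt_card_componentAttachments hH hatt hC he hf hef
  have hf2 := one_lt_card_componentAttachments hH hatt hC hf he (hef ∘ Linked.symm)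
  have hsub : Γ.componentAttachments C S e ∪ Γ.componentAttachments C S f ⊆ S :=
    Finset.union_subset (fun _ hu => (mem_componentAttachments.1 hu).1)
      (fun _ hu => (mem_componentAttachments.1 hu).1)
  have := Finset.card_le_card hsub
  rw [Finset.card_union_of_disjoint (disjoint_componentAttachments hef)] at this
  omega

end Split

end Multigraph

variable {V E : Type} [Fintype V] [DecidableEq V] [Fintype E] [DecidableEq E]

theorem four_twisting_cycles_connected_general
    (Γ : Multigraph V E) (x y z : V)
    (part : E → Fin 4)
    (hsep : ∀ e f, part e ≠ part f →
      ∀ u : V, u ∈ Γ.ends e → u ∈ Γ.ends f → u = x ∨ u = y ∨ u = z)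
    (H : Multigraph (V ⊕ Fin 4) E)
    (hH : ∀ e, H.ends e = Sym2.map
      (fun u => if u = x then Sum.inr (part e)
        else if u = y then Sum.inr (1 - part e)
        else if u = z then Sum.inr (part e - 2) else Sum.inl u) (Γ.ends e)) :
    ∀ C : Finset E, H.IsCycle C → Γ.ConnectedOn C := by
  let att : E → V → Fin 4 := fun e u => if u = x then part e else if u = y then 1 - part e
    else part e - 2
  have hsplit : ∀ e, H.ends e = (Γ.ends e).map (Multigraph.splitVertex {x, y, z} (att e)) := by
    intro e
    rw [hH e]
    congr 1
    funext u
    simp only [Multigraph.splitVertex, att]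
    split_ifs <;> simp_all
  have hatt : ∀ e f u, u ∈ Γ.ends e → u ∈ Γ.ends f → u ∉ ({x, y, z} : Finset V) →
      att e = att f := by
    intro e f u hue huf hu
    have hpart : part e = part f := by
      by_contra hne
      exact hu (by simpa using hsep e f hne u hue huf)
    simp only [att, hpart]
  exact fun C hC => Multigraph.connectedOn_of_isCycle_split Finset.card_le_three hsplit hatt hC

/-- If a signed graph `Ω` on `Γ` is a 4-twisting of `H` and
`M(G) = L(Ω)` for some graph `G`, then the edge set of every cycle of `H` is
connected in `Γ`. -/
theorem four_twisting_cycles_connected {W : Type} [Fintype W] [DecidableEq W]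
    (Γ : Multigraph V E) (x y z : V) (hxy : x ≠ y) (hxz : x ≠ z) (hyz : y ≠ z)
    (part : E → Fin 4)
    (hsep : ∀ e f, part e ≠ part f →
      ∀ u : V, u ∈ Γ.ends e → u ∈ Γ.ends f → u = x ∨ u = y ∨ u = z)
    (σ : E → ℤˣ)
    (hσ : ∀ e, σ e = if (part e = 0 ∧ x ∈ Γ.ends e) ∨ (part e = 1 ∧ y ∈ Γ.ends e) ∨
        (part e = 2 ∧ z ∈ Γ.ends e) then -1 else 1)
    (H : Multigraph (V ⊕ Fin 4) E)
    (hH : ∀ e, H.ends e = Sym2.map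
      (fun u => if u = x then Sum.inr (part e)
        else if u = y then Sum.inr (1 - part e)
        else if u = z then Sum.inr (part e - 2) else Sum.inl u) (Γ.ends e))
    (G : Multigraph W E)
    (hML : ∀ C : Finset E, Γ.LiftCircuit σ C ↔ G.IsCycle C) :
    ∀ C : Finset E, H.IsCycle C → Γ.ConnectedOn C :=
  four_twisting_cycles_connected_general Γ x y z part hsep H hH
end
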